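/- arXiv:2211.12793 — 2 statements merged into one kernel-verified Lean document; each statement's English description precedes it below -/
import Mathlib

section
/- The left quaternion discrete cosine transform preserves total energy (Parseval theorem): for every quaternion matrix Q ∈ ℍ^{M×N}, ‖FQDCT^L(Q)‖_F = ‖Q‖_F. -/
/-! The DCT-II matrix `C(u, m) = α(u) cos(π(2m+1)u/(2M))` is orthogonal. By product-to-sum,
`Σ_u C(u, m) C(u, m')` reduces to sums `Σ_{u<M} cos(πku/M)` with `k = m - m'` and
`k = m + m' + 1`; a geometric series in `exp(iπk/M)` evaluates these to `1` for odd `k` and `0`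
for even `k` not divisible by `2M`. The left QDCT of `Q` is `C_M (q̇ Q) C_Nᵀ`, and a real
orthogonal matrix acting on vectors with entries in any real inner product space (here `ℍ`)
preserves the sum of squared norms. Finally `|q̇ Q(m,n)| = |Q(m,n)|` because `|q̇|² = |q̇²| = 1`. -/

open Matrix

/-- Normalization factor of the DCT: `α(u) = √(1/M)` if `u = 0`, `√(2/M)` otherwise. -/
noncomputable def dctAlpha (M : ℕ) (u : Fin M) : ℝ :=
  if (u : ℕ) = 0 then Real.sqrt (1 / M) else Real.sqrt (2 / M)

/-- DCT kernel `N(u,v,m,n) = cos(π(2m+1)u/(2M)) · cos(π(2n+1)v/(2N))`. -/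
noncomputable def dctKer (M N : ℕ) (u : Fin M) (v : Fin N) (m : Fin M) (n : Fin N) : ℝ :=
  Real.cos (Real.pi * (2 * (m : ℝ) + 1) * (u : ℝ) / (2 * (M : ℝ))) *
    Real.cos (Real.pi * (2 * (n : ℝ) + 1) * (v : ℝ) / (2 * (N : ℝ)))

/-- Left forward quaternion discrete cosine transform:
`FQDCT^L(Q)(u,v) = α(u)β(v) Σ_m Σ_n q̇ · Q(m,n) · N(u,v,m,n)`. -/
noncomputable def FQDCTL (M N : ℕ) (q : Quaternion ℝ)
    (Q : Matrix (Fin M) (Fin N) (Quaternion ℝ)) :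
    Matrix (Fin M) (Fin N) (Quaternion ℝ) :=
  Matrix.of fun u v =>
    (dctAlpha M u * dctAlpha N v) •
      ∑ m : Fin M, ∑ n : Fin N, (dctKer M N u v m n) • (q * Q m n)

/-- Frobenius norm of a quaternion matrix: `‖A‖_F = sqrt(Σ_{m,n} |A(m,n)|²)`. -/
noncomputable def frob {M N : ℕ} (A : Matrix (Fin M) (Fin N) (Quaternion ℝ)) : ℝ :=
  Real.sqrt (∑ m : Fin M, ∑ n : Fin N, ‖A m n‖ ^ 2)

open Real Finset

theorem Complex.re_inv_sub_one_of_norm_eq_one {z : ℂ} (hz : ‖z‖ = 1) (h1 : z ≠ 1) :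
    (z - 1)⁻¹.re = -1 / 2 := by
  have hsq : z.re ^ 2 + z.im ^ 2 = 1 := by
    rw [← Complex.normSq_add_mul_I, Complex.normSq_eq_norm_sq, Complex.re_add_im, hz, one_pow]
  have hre : z.re - 1 ≠ 0 := by
    refine sub_ne_zero.mpr fun h => h1 (Complex.ext h ?_)
    simpa [h] using hsq
  rw [Complex.inv_re, Complex.normSq_apply]
  simp only [Complex.sub_re, Complex.sub_im, Complex.one_re, Complex.one_im, sub_zero]
  field_simp
  nlinarith

theorem sum_range_cos_pi_mul_div {M : ℕ} (hM : 0 < M) {k : ℤ} (hk : ¬ (2 * M : ℤ) ∣ k) :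
    ∑ u ∈ range M, cos (π * k * u / M) = if Odd k then 1 else 0 := by
  have hMc : (M : ℂ) ≠ 0 := by exact_mod_cast hM.ne'
  set z : ℂ := Complex.exp (π * k / M * Complex.I)
  have hz1 : z ≠ 1 := by
    rw [Ne, Complex.exp_eq_one_iff]
    rintro ⟨n, hn⟩
    refine hk ⟨n, ?_⟩
    have : (k : ℂ) = 2 * M * n := by
      field_simp at hn
      linear_combination hn
    exact_mod_cast this
  have hzM : z ^ M = (-1) ^ k := by
    rw [← Complex.exp_nat_mul, ← Complex.exp_pi_mul_I, ← Complex.exp_int_mul]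
    congr 1; field_simp
  have hterm : ∀ u : ℕ, cos (π * k * u / M) = (z ^ u).re := by
    intro u
    rw [← Complex.exp_nat_mul, ← Complex.exp_ofReal_mul_I_re]
    congr 2; push_cast; field_simp
  simp only [hterm, ← Complex.re_sum, geom_sum_eq hz1, hzM]
  rcases Int.even_or_odd k with hk | hk
  · simp [hk.neg_one_zpow, Int.not_odd_iff_even.mpr hk]
  · have hnorm : ‖z‖ = 1 := by simp [z, Complex.norm_exp]
    rw [hk.neg_one_zpow, if_pos hk, div_eq_mul_inv, show (-1 - 1 : ℂ) = ((-2 : ℝ) : ℂ) by norm_num,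
      Complex.re_ofReal_mul, Complex.re_inv_sub_one_of_norm_eq_one hnorm hz1]
    norm_num

theorem sum_dctAlpha_sq_mul (M : ℕ) (f : ℕ → ℝ) :
    ∑ u : Fin M, dctAlpha M u ^ 2 * f u = (2 * ∑ u ∈ range M, f u - f 0) / M := by
  rcases M.eq_zero_or_pos with rfl | hM
  · simp
  have hα : ∀ u : ℕ,
      (if u = 0 then √(1 / M) else √(2 / M)) ^ 2 = (2 - if u = 0 then 1 else 0) / M := by
    intro u; split_ifs <;> rw [sq_sqrt (by positivity)] <;> ring
  simp only [dctAlpha]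
  rw [Fin.sum_univ_eq_sum_range (fun u => (if u = 0 then √(1 / M) else √(2 / M)) ^ 2 * f u)]
  simp only [hα, sub_mul, sub_div, ite_mul, one_mul, zero_mul, sum_sub_distrib, sum_ite_eq',
    mem_range, hM, if_true, ← sum_div, ← mul_sum, div_mul_eq_mul_div]

noncomputable def dctMatrix (M : ℕ) : Matrix (Fin M) (Fin M) ℝ :=
  of fun u m => dctAlpha M u * cos (π * (2 * (m : ℝ) + 1) * u / (2 * M))

theorem cos_mul_cos_dct (M m m' u : ℕ) :
    cos (π * (2 * (m : ℝ) + 1) * u / (2 * M)) * cos (π * (2 * (m' : ℝ) + 1) * u / (2 * M)) =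
      (cos (π * ((m - m' : ℤ) : ℝ) * u / M) + cos (π * ((m + m' + 1 : ℤ) : ℝ) * u / M)) / 2 := by
  rw [cos_add_cos, ← cos_neg (π * (2 * (m' : ℝ) + 1) * u / (2 * M))]
  push_cast
  ring_nf

theorem dctMatrix_transpose_mul_self (M : ℕ) : (dctMatrix M)ᵀ * dctMatrix M = 1 := by
  ext m m'
  have hM : 0 < M := m.pos
  set k₁ : ℤ := m - m'
  set k₂ : ℤ := m + m' + 1
  set S : ℤ → ℝ := fun k => ∑ u ∈ range M, cos (π * k * u / M)
  have hS : ∀ k : ℤ, k ≠ 0 → |k| < 2 * M → S k = if Odd k then 1 else 0 := fun k hk₀ hk =>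
    sum_range_cos_pi_mul_div hM fun hdvd => hk₀ (Int.eq_zero_of_abs_lt_dvd hdvd hk)
  have hS₂ : S k₂ = if Odd k₂ then 1 else 0 := hS k₂ (by omega) (by rw [abs_lt]; omega)
  have hsum : ((dctMatrix M)ᵀ * dctMatrix M) m m' = (S k₁ + S k₂ - 1) / M := by
    simp only [mul_apply, transpose_apply, dctMatrix, of_apply]
    simp_rw [mul_mul_mul_comm _ (cos _), ← sq, cos_mul_cos_dct]
    rw [sum_dctAlpha_sq_mul M fun u => (cos (π * k₁ * u / M) + cos (π * k₂ * u / M)) / 2]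
    simp only [← sum_div, sum_add_distrib, CharP.cast_eq_zero, mul_zero, zero_div, cos_zero,
      add_self_div_two, S]
    ring
  rw [hsum, one_apply]
  by_cases h : m = m'
  · subst h
    have hk₁ : k₁ = 0 := sub_self _
    have hk₂ : Odd k₂ := ⟨m, by ring⟩
    simp [hk₁, hS₂, hk₂, S, hM.ne']
  · have hS₁ : S k₁ = if Odd k₁ then 1 else 0 :=
      hS k₁ (sub_ne_zero.mpr (by exact_mod_cast Fin.val_injective.ne h)) (by rw [abs_lt]; omega)
    have hpar : Odd k₂ ↔ ¬ Odd k₁ := by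
      rw [Int.odd_iff, Int.odd_iff]; omega
    rw [hS₁, hS₂, if_neg h]
    by_cases h₁ : Odd k₁ <;> simp [h₁, hpar]

section Parseval

variable {E : Type*} [NormedAddCommGroup E] [InnerProductSpace ℝ E]

theorem sum_norm_sq_sum_smul_of_transpose_mul_self {ι κ : Type*} [Fintype ι] [Fintype κ]
    [DecidableEq κ] {C : Matrix ι κ ℝ} (hC : Cᵀ * C = 1) (x : κ → E) :
    ∑ i, ‖∑ j, C i j • x j‖ ^ 2 = ∑ j, ‖x j‖ ^ 2 := by
  calc ∑ i, ‖∑ j, C i j • x j‖ ^ 2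
      = ∑ j, ∑ j', (Cᵀ * C) j j' * inner ℝ (x j) (x j') := by
        simp_rw [← real_inner_self_eq_norm_sq, sum_inner, inner_sum, real_inner_smul_left,
          real_inner_smul_right, mul_apply, transpose_apply, sum_mul]
        rw [sum_comm]
        refine sum_congr rfl fun j _ => ?_
        rw [sum_comm]
        simp_rw [mul_assoc]
    _ = ∑ j, ‖x j‖ ^ 2 := by simp [hC, one_apply]

theorem sum_sum_norm_sq_sum_sum_smul_of_transpose_mul_self {ι ι' κ κ' : Type*} [Fintype ι]
    [Fintype ι'] [Fintype κ] [Fintype κ'] [DecidableEq ι'] [DecidableEq κ']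
    {C : Matrix ι ι' ℝ} {D : Matrix κ κ' ℝ} (hC : Cᵀ * C = 1) (hD : Dᵀ * D = 1)
    (X : ι' → κ' → E) :
    ∑ i, ∑ k, ‖∑ i', ∑ k', (C i i' * D k k') • X i' k'‖ ^ 2 = ∑ i', ∑ k', ‖X i' k'‖ ^ 2 := by
  simp_rw [mul_smul, ← smul_sum]
  rw [sum_comm]
  simp_rw [sum_norm_sq_sum_smul_of_transpose_mul_self hC]
  rw [sum_comm]
  simp_rw [sum_norm_sq_sum_smul_of_transpose_mul_self hD]

end Parseval

theorem fqdctL_parseval_general (M N : ℕ)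
    (q : Quaternion ℝ) (hq : q ^ 2 = -1)
    (Q : Matrix (Fin M) (Fin N) (Quaternion ℝ)) :
    frob (FQDCTL M N q Q) = frob Q := by
  have hq₁ : ‖q‖ = 1 := by
    have h := congrArg norm hq
    rwa [norm_pow, norm_neg, norm_one, pow_eq_one_iff_of_nonneg (norm_nonneg q) two_ne_zero] at h
  have hentry : ∀ u v, FQDCTL M N q Q u v =
      ∑ m, ∑ n, (dctMatrix M u m * dctMatrix N v n) • (q * Q m n) := by
    intro u v
    simp only [FQDCTL, of_apply, smul_sum, smul_smul, dctMatrix, dctKer]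
    refine sum_congr rfl fun m _ => sum_congr rfl fun n _ => ?_
    congr 1
    ring
  unfold frob
  simp_rw [hentry, sum_sum_norm_sq_sum_sum_smul_of_transpose_mul_self
    (dctMatrix_transpose_mul_self M) (dctMatrix_transpose_mul_self N), norm_mul, hq₁, one_mul]

/-- Parseval theorem for the left quaternion discrete cosine transform: the
transform preserves the Frobenius norm. -/
theorem fqdctL_parseval (M N : ℕ) (hM : 1 ≤ M) (hN : 1 ≤ N)
    (q : Quaternion ℝ) (hre : q.re = 0) (hq : q ^ 2 = -1)
    (Q : Matrix (Fin M) (Fin N) (Quaternion ℝ)) :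
    frob (FQDCTL M N q Q) = frob Q :=
  fqdctL_parseval_general M N q hq Q
end

section
/- Let A ∈ ℍ^{M×N} be a quaternion matrix and let λ > 0, μ > 0 be reals. Define W* ∈ ℍ^{M×N} entrywise by W*(m,n) = 0 if |A(m,n)| ≤ λ/μ, and W*(m,n) = (1 − (λ/μ)/|A(m,n)|)·A(m,n) otherwise (the entrywise quaternion soft-thresholding of A with threshold λ/μ). Then W* is a global minimizer of the function f(W) = λ‖W‖₁ + (μ/2)‖W − A‖_F² over W ∈ ℍ^{M×N}, i.e., f(W*) ≤ f(W) for all W ∈ ℍ^{M×N}. -/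
open Matrix

/-- ℓ₁ norm of a quaternion matrix: `‖A‖₁ = Σ_{m,n} |A(m,n)|`. -/
noncomputable def l1Norm {M N : ℕ} (A : Matrix (Fin M) (Fin N) (Quaternion ℝ)) : ℝ :=
  ∑ m : Fin M, ∑ n : Fin N, ‖A m n‖

/-!
The objective splits into a sum of independent entrywise problems
`λ‖w‖ + (μ/2)‖w - a‖²`, i.e. `μ (t‖w‖ + ½‖w - a‖²)` with `t = λ/μ`. For such a problem only
the norms matter: by the reverse triangle inequality `‖w - a‖ ≥ |‖w‖ - ‖a‖|`, so the value at
`w` is at least that of the scalar problem `s ↦ t s + ½ (s - ‖a‖)²` at `s = ‖w‖`, which is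
minimized over `s ≥ 0` at `s = max (‖a‖ - t) 0`; soft-thresholding attains exactly that value.
-/

section SoftThreshold

variable {E : Type*} [NormedAddCommGroup E] [NormedSpace ℝ E]

noncomputable def softThreshold (t : ℝ) (a : E) : E :=
  if ‖a‖ ≤ t then 0 else (1 - t / ‖a‖) • a

lemma norm_softThreshold_of_lt {t : ℝ} {a : E} (ht : 0 ≤ t) (h : t < ‖a‖) :
    ‖softThreshold t a‖ = ‖a‖ - t := by
  have ha : 0 < ‖a‖ := ht.trans_lt h
  have hcoef : 0 ≤ 1 - t / ‖a‖ := sub_nonneg.mpr ((div_le_one ha).mpr h.le)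
  rw [softThreshold, if_neg h.not_ge, norm_smul, Real.norm_eq_abs, abs_of_nonneg hcoef]
  field_simp

lemma norm_softThreshold_sub_of_lt {t : ℝ} {a : E} (ht : 0 ≤ t) (h : t < ‖a‖) :
    ‖softThreshold t a - a‖ = t := by
  have ha : 0 < ‖a‖ := ht.trans_lt h
  have hsub : (1 - t / ‖a‖) • a - a = (t / ‖a‖) • (-a) := by module
  rw [softThreshold, if_neg h.not_ge, hsub, norm_smul, norm_neg, Real.norm_eq_abs,
    abs_of_nonneg (div_nonneg ht ha.le)]
  field_simp

theorem softThreshold_objective_le {t : ℝ} (ht : 0 ≤ t) (a w : E) :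
    t * ‖softThreshold t a‖ + ‖softThreshold t a - a‖ ^ 2 / 2 ≤
      t * ‖w‖ + ‖w - a‖ ^ 2 / 2 := by
  have hdist : |‖w‖ - ‖a‖| ≤ ‖w - a‖ := abs_norm_sub_norm_le w a
  have hsq : (‖w‖ - ‖a‖) ^ 2 ≤ ‖w - a‖ ^ 2 := by
    rw [← sq_abs]
    exact pow_le_pow_left₀ (abs_nonneg _) hdist 2
  rcases le_or_gt ‖a‖ t with h | h
  · have hw : ‖a‖ ^ 2 ≤ t * ‖w‖ * 2 + (‖w‖ - ‖a‖) ^ 2 := by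
      nlinarith [norm_nonneg a, norm_nonneg w]
    rw [softThreshold, if_pos h, norm_zero, zero_sub, norm_neg]
    linarith
  · rw [norm_softThreshold_of_lt ht h, norm_softThreshold_sub_of_lt ht h]
    nlinarith [sq_nonneg (‖w‖ - ‖a‖ + t)]

end SoftThreshold

lemma frob_sq {M N : ℕ} (A : Matrix (Fin M) (Fin N) (Quaternion ℝ)) :
    frob A ^ 2 = ∑ m : Fin M, ∑ n : Fin N, ‖A m n‖ ^ 2 :=
  Real.sq_sqrt (Finset.sum_nonneg fun _ _ => Finset.sum_nonneg fun _ _ => sq_nonneg _)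

lemma l1Norm_add_frob_sub_sq {M N : ℕ} (lam μ : ℝ) (W A : Matrix (Fin M) (Fin N) (Quaternion ℝ)) :
    lam * l1Norm W + μ / 2 * frob (W - A) ^ 2 =
      ∑ m : Fin M, ∑ n : Fin N, (lam * ‖W m n‖ + μ / 2 * ‖W m n - A m n‖ ^ 2) := by
  simp only [frob_sq, l1Norm, Matrix.sub_apply, Finset.mul_sum, ← Finset.sum_add_distrib]

/-- The entrywise quaternion soft-thresholding of `A` with threshold `λ/μ` is a
global minimizer of `W ↦ λ‖W‖₁ + (μ/2)‖W − A‖_F²`. -/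
theorem soft_threshold_matrix_minimizer (M N : ℕ)
    (A : Matrix (Fin M) (Fin N) (Quaternion ℝ))
    (lam μ : ℝ) (hlam : 0 < lam) (hμ : 0 < μ)
    (Wstar : Matrix (Fin M) (Fin N) (Quaternion ℝ))
    (hWstar : ∀ (m : Fin M) (n : Fin N),
      Wstar m n = if ‖A m n‖ ≤ lam / μ then 0
        else (1 - (lam / μ) / ‖A m n‖) • A m n) :
    ∀ W : Matrix (Fin M) (Fin N) (Quaternion ℝ),
      lam * l1Norm Wstar + μ / 2 * frob (Wstar - A) ^ 2 ≤
        lam * l1Norm W + μ / 2 * frob (W - A) ^ 2 := by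
  intro W
  have hscale : ∀ w a : Quaternion ℝ,
      lam * ‖w‖ + μ / 2 * ‖w - a‖ ^ 2 = μ * (lam / μ * ‖w‖ + ‖w - a‖ ^ 2 / 2) := by
    intro w a
    field_simp
  rw [l1Norm_add_frob_sub_sq, l1Norm_add_frob_sub_sq]
  refine Finset.sum_le_sum fun m _ => Finset.sum_le_sum fun n _ => ?_
  rw [hscale, hscale, show Wstar m n = softThreshold (lam / μ) (A m n) from hWstar m n]
  exact mul_le_mul_of_nonneg_left
    (softThreshold_objective_le (div_pos hlam hμ).le (A m n) (W m n)) hμ.le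
end
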